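/- Correctness of the Hopcroft–Karp-style equivalence test for deterministic forest automata: Let M₁, M₂ be deterministic forest automata and suppose a partition (Union-Find structure) on Q₁ ⊎ Q₂ is constructed such that (a) Find(0₁) = Find(0₂); (b) if Find(p₁) = Find(p₂) and Find(q₁) = Find(q₂) with pᵢ, qᵢ ∈ Qᵢ, then Find(δ₁(p₁,a)) = Find(δ₂(p₂,a)) for all a ∈ A and Find(p₁+q₁) = Find(p₂+q₂); (c) no block contains both an accepting state of one automaton and a non-accepting state of the other. Then L(M₁) = L(M₂). More precisely, Find(p₁) = Find(p₂) implies L(p₁) = L(p₂), where L(p) = { c ∈ C(A) | δ̂(p,c) ∈ E } is the set of contexts sending p into an accepting state. -/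

import Mathlib

/-- Forests over an alphabet `A`. -/
inductive Forest (A : Type) : Type
  | nil : Forest A
  | cons : A → Forest A → Forest A → Forest A

namespace Forest

def append {A : Type} : Forest A → Forest A → Forest A
  | nil, g => g
  | cons a c f, g => cons a c (append f g)

end Forest

/-- Contexts over `A`: forests with exactly one hole at a leaf. -/
inductive Context (A : Type) : Type
  | hole : Forest A → Context A
  | cons : A → Forest A → Context A → Context A
  | down : A → Context A → Forest A → Context A

/-- A deterministic forest automaton. -/
structure FDFA (A Q : Type) where
  zero : Q
  add : Q → Q → Q
  add_assoc : ∀ p q r, add (add p q) r = add p (add q r)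
  zero_add : ∀ q, add zero q = q
  add_zero : ∀ q, add q zero = q
  δ : Q → A → Q
  E : Set Q

def FDFA.eval {A Q : Type} (M : FDFA A Q) : Forest A → Q
  | .nil => M.zero
  | .cons a c f => M.add (M.δ (M.eval c) a) (M.eval f)

def FDFA.Lang {A Q : Type} (M : FDFA A Q) : Set (Forest A) := {f | M.eval f ∈ M.E}

/-- `δ̂(c, p)`: the state reached by evaluating the context `c` with the value of
the hole set to `p`. -/
def FDFA.ceval {A Q : Type} (M : FDFA A Q) : Context A → Q → Q
  | .hole g, p => M.add p (M.eval g)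
  | .cons a t c, p => M.add (M.δ (M.eval t) a) (M.ceval c p)
  | .down a c g, p => M.add (M.δ (M.ceval c p) a) (M.eval g)

/-! The relation "same block of the partition" relates the two initial states and is
preserved by the transitions and by addition, so by structural induction it relates the
states that the two automata reach on every forest, and on every context from related
hole values; condition (c) then turns related states into equal acceptance. -/

namespace FDFA

variable {A Q₁ Q₂ : Type}

structure IsCongruence (M₁ : FDFA A Q₁) (M₂ : FDFA A Q₂) (R : Q₁ → Q₂ → Prop) : Prop where
  zero : R M₁.zero M₂.zero
  δ : ∀ p₁ p₂ a, R p₁ p₂ → R (M₁.δ p₁ a) (M₂.δ p₂ a)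
  add : ∀ p₁ p₂ q₁ q₂, R p₁ p₂ → R q₁ q₂ → R (M₁.add p₁ q₁) (M₂.add p₂ q₂)

namespace IsCongruence

variable {M₁ : FDFA A Q₁} {M₂ : FDFA A Q₂} {R : Q₁ → Q₂ → Prop}

theorem eval (hR : IsCongruence M₁ M₂ R) : ∀ f : Forest A, R (M₁.eval f) (M₂.eval f)
  | .nil => hR.zero
  | .cons a c f => hR.add _ _ _ _ (hR.δ _ _ a (hR.eval c)) (hR.eval f)

theorem ceval (hR : IsCongruence M₁ M₂ R) :
    ∀ (c : Context A) {p₁ p₂}, R p₁ p₂ → R (M₁.ceval c p₁) (M₂.ceval c p₂)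
  | .hole g, _, _, h => hR.add _ _ _ _ h (hR.eval g)
  | .cons a t c, _, _, h => hR.add _ _ _ _ (hR.δ _ _ a (hR.eval t)) (hR.ceval c h)
  | .down a c g, _, _, h => hR.add _ _ _ _ (hR.δ _ _ a (hR.ceval c h)) (hR.eval g)

theorem lang_eq (hR : IsCongruence M₁ M₂ R)
    (hE : ∀ p₁ p₂, R p₁ p₂ → (p₁ ∈ M₁.E ↔ p₂ ∈ M₂.E)) : M₁.Lang = M₂.Lang :=
  Set.ext fun f => hE _ _ (hR.eval f)

theorem contextLang_eq (hR : IsCongruence M₁ M₂ R)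
    (hE : ∀ p₁ p₂, R p₁ p₂ → (p₁ ∈ M₁.E ↔ p₂ ∈ M₂.E)) {p₁ : Q₁} {p₂ : Q₂} (h : R p₁ p₂) :
    {c : Context A | M₁.ceval c p₁ ∈ M₁.E} = {c : Context A | M₂.ceval c p₂ ∈ M₂.E} :=
  Set.ext fun c => hE _ _ (hR.ceval c h)

end IsCongruence

end FDFA

/-- correctness of the Hopcroft–Karp-style equivalence test:
suppose a partition (given by `Find : Q₁ ⊎ Q₂ → β`) satisfies
(a) `Find(0₁) = Find(0₂)`;
(b) it is a congruence for the alphabet transitions and the horizontal addition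
across the two automata;
(c) no block contains an accepting state of one automaton together with a
non-accepting state of the other.
Then `L(M₁) = L(M₂)`; more precisely, `Find(p₁) = Find(p₂)` implies
`L(p₁) = L(p₂)`, where `L(p) = {c ∈ C(A) | δ̂(p,c) ∈ E}`. -/
theorem equivalence_test_correct {A Q₁ Q₂ β : Type}
    (M₁ : FDFA A Q₁) (M₂ : FDFA A Q₂) (Find : Sum Q₁ Q₂ → β)
    (h0 : Find (Sum.inl M₁.zero) = Find (Sum.inr M₂.zero))
    (hδ : ∀ p₁ p₂ a, Find (Sum.inl p₁) = Find (Sum.inr p₂) →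
      Find (Sum.inl (M₁.δ p₁ a)) = Find (Sum.inr (M₂.δ p₂ a)))
    (hadd : ∀ p₁ p₂ q₁ q₂, Find (Sum.inl p₁) = Find (Sum.inr p₂) →
      Find (Sum.inl q₁) = Find (Sum.inr q₂) →
      Find (Sum.inl (M₁.add p₁ q₁)) = Find (Sum.inr (M₂.add p₂ q₂)))
    (hE : ∀ p₁ p₂, Find (Sum.inl p₁) = Find (Sum.inr p₂) →
      (p₁ ∈ M₁.E ↔ p₂ ∈ M₂.E)) :
    M₁.Lang = M₂.Lang ∧
    ∀ p₁ p₂, Find (Sum.inl p₁) = Find (Sum.inr p₂) →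
      {c : Context A | M₁.ceval c p₁ ∈ M₁.E} = {c : Context A | M₂.ceval c p₂ ∈ M₂.E} := by
  have hR : FDFA.IsCongruence M₁ M₂ fun p₁ p₂ => Find (Sum.inl p₁) = Find (Sum.inr p₂) :=
    ⟨h0, hδ, hadd⟩
  exact ⟨hR.lang_eq hE, fun _ _ h => hR.contextLang_eq hE h⟩
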